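/- arXiv:2503.22988 — 2 statements merged into one kernel-verified Lean document; each statement's English description precedes it below -/
import Mathlib

section
/- Under the same setup, the sharper bound ||ḡ − g||₂ ≤ P(C)·(G − C) holds when C ≤ G, where ḡ = (1/N)Σᵢ Clip(gᵢ, C), g = (1/N)Σᵢ gᵢ, ||gᵢ|| ≤ G, and P(C) is the fraction of indices with ||gᵢ|| > C. -/
noncomputable def clip {d : ℕ} (g : EuclideanSpace ℝ (Fin d)) (C : ℝ) : EuclideanSpace ℝ (Fin d) :=
  (max 1 (‖g‖ / C))⁻¹ • g

theorem clipping_bias_bound_sharp {d N : ℕ} (hN : 0 < N) (G C : ℝ) (hC : 0 < C)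
    (hCG : C ≤ G) (g : Fin N → EuclideanSpace ℝ (Fin d)) (hG : ∀ i, ‖g i‖ ≤ G) :
    ‖(1 / (N : ℝ)) • ∑ i, clip (g i) C - (1 / (N : ℝ)) • ∑ i, g i‖ ≤
      (((Finset.univ.filter fun i => C < ‖g i‖).card : ℝ) / N) * (G - C) := by
  have hNpos : (0 : ℝ) < N := Nat.cast_pos.mpr hN
  have key : ∀ i, ‖clip (g i) C - g i‖ ≤ if C < ‖g i‖ then G - C else 0 := by
    intro i
    rcases le_or_gt ‖g i‖ C with h | h
    · have hle : ‖g i‖ / C ≤ 1 := (div_le_one hC).mpr h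
      have : clip (g i) C = g i := by
        simp [clip, max_eq_left hle]
      simp [this, not_lt.mpr h]
    · have hge : 1 ≤ ‖g i‖ / C := (one_le_div hC).mpr h.le
      have hgpos : 0 < ‖g i‖ := lt_trans hC h
      have hmax : max 1 (‖g i‖ / C) = ‖g i‖ / C := max_eq_right hge
      have hclip : clip (g i) C - g i = ((‖g i‖ / C)⁻¹ - 1) • g i := by
        rw [clip, hmax, sub_smul, one_smul]
      rw [hclip, norm_smul]
      have hinv : (‖g i‖ / C)⁻¹ = C / ‖g i‖ := by
        rw [inv_div]
      have : ‖(‖g i‖ / C)⁻¹ - 1‖ = 1 - C / ‖g i‖ := by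
        rw [hinv, Real.norm_eq_abs, abs_of_nonpos (by
          have : C / ‖g i‖ ≤ 1 := (div_le_one hgpos).mpr h.le
          linarith)]
        ring
      rw [this, if_pos h]
      have : (1 - C / ‖g i‖) * ‖g i‖ = ‖g i‖ - C := by
        field_simp
      rw [this]
      linarith [hG i]
  have hd : (1 / (N : ℝ)) • ∑ i, clip (g i) C - (1 / (N : ℝ)) • ∑ i, g i
      = (1 / (N : ℝ)) • ∑ i, (clip (g i) C - g i) := by
    rw [Finset.sum_sub_distrib, smul_sub]
  rw [hd, norm_smul]
  have h1 : ‖(1 / (N : ℝ))‖ = 1 / N := by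
    rw [Real.norm_eq_abs, abs_of_pos (by positivity)]
  rw [h1]
  have h2 : ‖∑ i, (clip (g i) C - g i)‖ ≤
      ((Finset.univ.filter fun i => C < ‖g i‖).card : ℝ) * (G - C) := by
    calc ‖∑ i, (clip (g i) C - g i)‖ ≤ ∑ i, ‖clip (g i) C - g i‖ :=
          norm_sum_le _ _
      _ ≤ ∑ i, if C < ‖g i‖ then G - C else 0 :=
          Finset.sum_le_sum fun i _ => key i
      _ = ((Finset.univ.filter fun i => C < ‖g i‖).card : ℝ) * (G - C) := by
          rw [Finset.sum_ite, Finset.sum_const_zero, add_zero, Finset.sum_const,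
            nsmul_eq_mul]
  calc (1 / (N : ℝ)) * ‖∑ i, (clip (g i) C - g i)‖
      ≤ (1 / N) * (((Finset.univ.filter fun i => C < ‖g i‖).card : ℝ) * (G - C)) := by
        apply mul_le_mul_of_nonneg_left h2 (by positivity)
    _ = (((Finset.univ.filter fun i => C < ‖g i‖).card : ℝ) / N) * (G - C) := by ring
end

section
/- Let g₁,…,g_N ∈ R^d with ||gᵢ|| ≤ G, and let ḡ_t = (1/N)Σᵢ Clip(gᵢ, C) and g_t = (1/N)Σᵢ gᵢ. Then ⟨g_t, ḡ_t⟩ ≥ ||g_t||² − ||g_t||·P(C)·G, where P(C) is the fraction of indices with ||gᵢ|| > C. -/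
open Finset

section Clip

variable {d : ℕ}

theorem clip_eq_self_of_norm_le {g : EuclideanSpace ℝ (Fin d)} {C : ℝ} (h : ‖g‖ ≤ C) :
    clip g C = g := by
  have hle : ‖g‖ / C ≤ 1 := div_le_one_of_le₀ h ((norm_nonneg g).trans h)
  rw [clip, max_eq_left hle, inv_one, one_smul]

/-- The clipping factor lies in `(0, 1]` for every `C`, even `C ≤ 0`. -/
theorem norm_clip_sub_le (g : EuclideanSpace ℝ (Fin d)) (C : ℝ) : ‖clip g C - g‖ ≤ ‖g‖ := by
  set s := (max 1 (‖g‖ / C))⁻¹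
  have hs_pos : 0 < s := inv_pos.mpr (one_pos.trans_le (le_max_left _ _))
  have hs_le : s ≤ 1 := inv_le_one_of_one_le₀ (le_max_left _ _)
  have hs : ‖s - 1‖ ≤ 1 := by
    rw [Real.norm_eq_abs, abs_le]
    constructor <;> linarith
  calc ‖clip g C - g‖ = ‖s - 1‖ * ‖g‖ := by rw [clip, ← norm_smul, sub_smul, one_smul]
    _ ≤ ‖g‖ := mul_le_of_le_one_left (norm_nonneg g) hs

end Clip

theorem norm_sum_sub_sum_le_card_filter_mul {ι E : Type*} [Fintype ι] [SeminormedAddCommGroup E]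
    {f h : ι → E} (p : ι → Prop) [DecidablePred p] {G : ℝ}
    (heq : ∀ i, ¬ p i → f i = h i) (hle : ∀ i, p i → ‖f i - h i‖ ≤ G) :
    ‖∑ i, f i - ∑ i, h i‖ ≤ #{i | p i} * G := by
  have hsupp : ∑ i with p i, (f i - h i) = ∑ i, (f i - h i) :=
    sum_filter_of_ne fun i _ hne => by_contra fun hp => hne (sub_eq_zero.mpr (heq i hp))
  rw [← sum_sub_distrib, ← hsupp, ← nsmul_eq_mul, ← sum_const]
  exact norm_sum_le_of_le _ fun i hi => hle i (mem_filter.mp hi).2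

theorem norm_avg_clip_sub_avg_le {d N : ℕ} {G : ℝ} (C : ℝ) (g : Fin N → EuclideanSpace ℝ (Fin d))
    (hG : ∀ i, ‖g i‖ ≤ G) :
    ‖(1 / (N : ℝ)) • ∑ i, clip (g i) C - (1 / (N : ℝ)) • ∑ i, g i‖ ≤
      (#{i | C < ‖g i‖} / N) * G := by
  have hsum : ‖∑ i, clip (g i) C - ∑ i, g i‖ ≤ #{i | C < ‖g i‖} * G :=
    norm_sum_sub_sum_le_card_filter_mul _ (fun i hi => clip_eq_self_of_norm_le (not_lt.mp hi))
      fun i _ => (norm_clip_sub_le _ _).trans (hG i)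
  rw [← smul_sub, norm_smul, Real.norm_of_nonneg (by positivity)]
  calc 1 / (N : ℝ) * ‖∑ i, clip (g i) C - ∑ i, g i‖ ≤ 1 / N * (#{i | C < ‖g i‖} * G) := by gcongr
    _ = #{i | C < ‖g i‖} / N * G := by ring

theorem norm_sq_sub_mul_le_real_inner_of_norm_sub_le {E : Type*} [NormedAddCommGroup E]
    [InnerProductSpace ℝ E] {x y : E} {b : ℝ} (h : ‖y - x‖ ≤ b) :
    ‖x‖ ^ 2 - ‖x‖ * b ≤ inner ℝ x y := by
  have hsplit : inner ℝ x y = ‖x‖ ^ 2 + inner ℝ x (y - x) := by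
    rw [inner_sub_right, real_inner_self_eq_norm_sq]
    ring
  have hcs : -(‖x‖ * b) ≤ inner ℝ x (y - x) :=
    calc -(‖x‖ * b) ≤ -(‖x‖ * ‖y - x‖) := neg_le_neg (by gcongr)
      _ ≤ inner ℝ x (y - x) := neg_le_of_abs_le (abs_real_inner_le_norm x (y - x))
  linarith

theorem inner_product_lower_bound_general {d N : ℕ} (G C : ℝ)
    (g : Fin N → EuclideanSpace ℝ (Fin d)) (hG : ∀ i, ‖g i‖ ≤ G)
    (gt gbar : EuclideanSpace ℝ (Fin d))
    (hgt : gt = (1 / (N : ℝ)) • ∑ i, g i)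
    (hgbar : gbar = (1 / (N : ℝ)) • ∑ i, clip (g i) C) :
    (inner ℝ gt gbar : ℝ) ≥
      ‖gt‖ ^ 2 - ‖gt‖ * ((((Finset.univ.filter fun i => C < ‖g i‖).card : ℝ) / N) * G) := by
  subst hgt hgbar
  exact norm_sq_sub_mul_le_real_inner_of_norm_sub_le (norm_avg_clip_sub_avg_le C g hG)

theorem inner_product_lower_bound {d N : ℕ} (hN : 0 < N) (G C : ℝ) (hC : 0 < C)
    (g : Fin N → EuclideanSpace ℝ (Fin d)) (hG : ∀ i, ‖g i‖ ≤ G)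
    (gt gbar : EuclideanSpace ℝ (Fin d))
    (hgt : gt = (1 / (N : ℝ)) • ∑ i, g i)
    (hgbar : gbar = (1 / (N : ℝ)) • ∑ i, clip (g i) C) :
    (inner ℝ gt gbar : ℝ) ≥
      ‖gt‖ ^ 2 - ‖gt‖ * ((((Finset.univ.filter fun i => C < ‖g i‖).card : ℝ) / N) * G) :=
  inner_product_lower_bound_general G C g hG gt gbar hgt hgbar
end
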